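/- arXiv:2104.07137 — 3 statements merged into one kernel-verified Lean document; each statement's English description precedes it below -/
import Mathlib

section
/- For all u ≥ 1 one has (u + 2)/4 ≤ ξ(u) ≤ u + 1. -/
open MeasureTheory Set

/-!
The value of `ξ` at `u` is determined by `ξ` on `[1, u - 1]`, so everything is proved by induction
on intervals of length one. First `ξ` is continuous on `[1, ∞)`: this makes the integral in the
equation a genuine one rather than Lean's junk value for a non-integrable function. Then the
bounds propagate: on `[1, 2]` the integral vanishes and `ξ u = 2 / u`, while for `u ≥ 2` the
function `(u + 2) / 4` satisfies the equation exactly and `u + 1` gives `u² - 2 ≤ u (u + 1)`.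
-/

theorem Real.step_induction {P : ℝ → Prop} {a : ℝ}
    (step : ∀ u, a ≤ u → (∀ t ∈ Icc a (u - 1), P t) → P u) : ∀ u, a ≤ u → P u := by
  suffices h : ∀ n : ℕ, ∀ u ∈ Ico a (a + n), P u by
    intro u hu
    obtain ⟨n, hn⟩ := exists_nat_gt (u - a)
    exact h n u ⟨hu, by linarith⟩
  intro n
  induction n with
  | zero => simp
  | succ n ih =>
    rintro u ⟨hu, hu'⟩
    push_cast at hu'
    exact step u hu fun t ht => ih t ⟨ht.1, by linarith [ht.2]⟩

section VanishingBelow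

variable {f : ℝ → ℝ} {a : ℝ}

theorem intervalIntegral_eq_zero_of_eq_zero_of_lt (hf : ∀ t < a, f t = 0) {v : ℝ} (hv : v ≤ a) :
    ∫ t in a..v, f t = 0 := by
  rw [intervalIntegral.integral_symm, intervalIntegral.integral_of_le hv,
    integral_Ioc_eq_integral_Ioo, setIntegral_eq_zero_of_forall_eq_zero fun t ht => hf t ht.2,
    neg_zero]

theorem continuousOn_primitive_Iic_of_eq_zero_of_lt (hf : ∀ t < a, f t = 0) {b : ℝ}
    (hint : IntervalIntegrable f volume a b) :
    ContinuousOn (fun x => ∫ t in a..x, f t) (Iic b) := by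
  have hmax : ∀ x, ∫ t in a..x, f t = ∫ t in a..(max x a), f t := by
    intro x
    rcases le_total x a with hx | hx
    · rw [max_eq_right hx, intervalIntegral_eq_zero_of_eq_zero_of_lt hf hx,
        intervalIntegral.integral_same]
    · rw [max_eq_left hx]
  have hmaps : MapsTo (fun x => max x a) (Iic b) (uIcc a b) := by
    intro x hx
    rcases le_total a b with hab | hba
    · rw [uIcc_of_le hab]
      exact ⟨le_max_right x a, max_le hx hab⟩
    · show max x a ∈ _
      rw [max_eq_right (le_trans (mem_Iic.1 hx) hba)]
      exact left_mem_uIcc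
  refine ContinuousOn.congr ?_ fun x _ => hmax x
  exact (intervalIntegral.continuousOn_primitive_interval' hint left_mem_uIcc).comp
    (continuous_id.max continuous_const).continuousOn hmaps

end VanishingBelow

structure SolvesXiEquation (ξ : ℝ → ℝ) : Prop where
  eq_zero_of_lt_one : ∀ u < 1, ξ u = 0
  mul_eq : ∀ u, 1 ≤ u → u * ξ u = 2 + 2 * ∫ t in (1 : ℝ)..(u - 1), ξ t

namespace SolvesXiEquation

variable {ξ : ℝ → ℝ}

theorem continuousOn_Icc_add_one (h : SolvesXiEquation ξ) {c : ℝ} (hc : 1 ≤ c)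
    (hξc : ContinuousOn ξ (Icc 1 c)) : ContinuousOn ξ (Icc 1 (c + 1)) := by
  have hF := continuousOn_primitive_Iic_of_eq_zero_of_lt h.eq_zero_of_lt_one
    (hξc.intervalIntegrable_of_Icc hc)
  have hmaps : MapsTo (fun u : ℝ => u - 1) (Icc 1 (c + 1)) (Iic c) :=
    fun u hu => by simp only [mem_Iic]; linarith [hu.2]
  have hrhs : ContinuousOn (fun u => (2 + 2 * ∫ t in (1 : ℝ)..(u - 1), ξ t) / u) (Icc 1 (c + 1)) :=
    (continuousOn_const.add (continuousOn_const.mul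
      (hF.comp (continuous_sub_right 1).continuousOn hmaps))).div continuousOn_id
      fun u hu => by linarith [hu.1]
  refine hrhs.congr fun u hu => ?_
  exact eq_div_of_mul_eq (by linarith [hu.1]) (by rw [mul_comm]; exact h.mul_eq u hu.1)

theorem continuousOn_Icc (h : SolvesXiEquation ξ) (b : ℝ) : ContinuousOn ξ (Icc 1 b) := by
  suffices hn : ∀ n : ℕ, ContinuousOn ξ (Icc 1 (n + 1)) by
    obtain ⟨n, hn'⟩ := exists_nat_ge b
    exact (hn n).mono (Icc_subset_Icc_right (by linarith))
  intro n
  induction n with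
  | zero => simp
  | succ n ih =>
    push_cast
    exact h.continuousOn_Icc_add_one (by linarith [n.cast_nonneg (α := ℝ)]) ih

theorem intervalIntegrable (h : SolvesXiEquation ξ) {b : ℝ} (hb : 1 ≤ b) :
    IntervalIntegrable ξ volume 1 b :=
  (h.continuousOn_Icc b).intervalIntegrable_of_Icc hb

theorem mul_eq_two (h : SolvesXiEquation ξ) {u : ℝ} (hu : 1 ≤ u) (hu2 : u ≤ 2) : u * ξ u = 2 := by
  rw [h.mul_eq u hu, intervalIntegral_eq_zero_of_eq_zero_of_lt h.eq_zero_of_lt_one (by linarith),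
    mul_zero, add_zero]

theorem add_two_div_four_le (h : SolvesXiEquation ξ) : ∀ u, 1 ≤ u → (u + 2) / 4 ≤ ξ u := by
  refine Real.step_induction fun u hu ih => ?_
  rw [div_le_iff₀' (by norm_num), ← mul_le_mul_iff_right₀ (by linarith : 0 < u)]
  rcases le_total u 2 with hu2 | hu2
  · nlinarith [h.mul_eq_two hu hu2]
  · have hint := intervalIntegral.integral_mono_on (by linarith)
      (continuous_add_const 2 |>.div_const 4 |>.intervalIntegrable 1 (u - 1))
      (h.intervalIntegrable (by linarith)) ih
    have hval : ∫ t in (1 : ℝ)..(u - 1), (t + 2) / 4 = u * (u + 2) / 8 - 1 := by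
      simp [intervalIntegral.integral_div, integral_id]
      ring
    nlinarith [h.mul_eq u hu]

theorem le_add_one (h : SolvesXiEquation ξ) : ∀ u, 1 ≤ u → ξ u ≤ u + 1 := by
  refine Real.step_induction fun u hu ih => ?_
  rw [← mul_le_mul_iff_right₀ (by linarith : 0 < u)]
  rcases le_total u 2 with hu2 | hu2
  · nlinarith [h.mul_eq_two hu hu2]
  · have hint := intervalIntegral.integral_mono_on (by linarith)
      (h.intervalIntegrable (by linarith)) ((continuous_add_const 1).intervalIntegrable 1 (u - 1)) ih
    have hval : ∫ t in (1 : ℝ)..(u - 1), (t + 1) = (u ^ 2 - 4) / 2 := by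
      simp [integral_id]
      ring
    nlinarith [h.mul_eq u hu]

end SolvesXiEquation

theorem xi_elementary_bounds (ξ : ℝ → ℝ)
    (hξ0 : ∀ u : ℝ, u < 1 → ξ u = 0)
    (hξ : ∀ u : ℝ, 1 ≤ u → u * ξ u = 2 + 2 * ∫ t in (1:ℝ)..(u - 1), ξ t) :
    ∀ u : ℝ, 1 ≤ u → (u + 2) / 4 ≤ ξ u ∧ ξ u ≤ u + 1 := by
  have h : SolvesXiEquation ξ := ⟨hξ0, hξ⟩
  exact fun u hu => ⟨h.add_two_div_four_le u hu, h.le_add_one u hu⟩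
end

section
/- For all u ≥ 0 one has ξ(u) = 2ω(u) + ∫₀^u ω(t) ω(u−t) dt. -/
/-!
Write `(f ⋆ g)(u) = ∫₀ᵘ f(t) g(u - t) dt`. Both `ξ` and `F = 2ω + ω ⋆ ω` vanish below `1`
and solve `u F(u) = 2 + 2 ∫₁^{u-1} F`; this delay equation determines its solution one unit
interval at a time, so `ξ = F`.

For `F`, multiplication by `u` is a derivation for `⋆`, so `u (ω ⋆ ω)(u) = 2 ((t ω) ⋆ ω)(u)`.
The Buchstab equation reads `t ω(t) = 1 + W(t - 1)` for `t ≥ 1`, where `W(x) = ∫₀ˣ ω`, and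
Fubini gives `∫₀ˣ (ω ⋆ ω) = (ω ⋆ W)(x)`; together,
`u (ω ⋆ ω)(u) = 2 W(u - 1) + 2 ∫₁^{u-1} (ω ⋆ ω)`.
-/

open Real MeasureTheory Set intervalIntegral

noncomputable def laplaceConv (f g : ℝ → ℝ) (u : ℝ) : ℝ :=
  ∫ t in (0:ℝ)..u, f t * g (u - t)

section LaplaceConv

variable {f g : ℝ → ℝ} {x : ℝ}

theorem laplaceConv_eq_zero_of_lt {c u : ℝ} (h0 : ∀ t < c, f t = 0) (hc : 0 < c) (hu : u < c) :
    laplaceConv f g u = 0 := by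
  refine (integral_congr fun t ht => ?_).trans integral_zero
  rw [h0 t (ht.2.trans_lt (max_lt hc hu)), zero_mul]

def convTriangle (x : ℝ) : Set (ℝ × ℝ) := {p | 0 ≤ p.2 ∧ p.2 ≤ p.1 ∧ p.1 ≤ x}

theorem convTriangle_indicator_eq_fst (F : ℝ × ℝ → ℝ) (t s : ℝ) :
    (convTriangle x).indicator F (t, s) =
      (Icc 0 x).indicator (fun t => (Icc 0 t).indicator (fun s => F (t, s)) s) t := by
  simp only [convTriangle, indicator, mem_Icc, mem_ofPred_eq]
  split_ifs <;> grind

theorem convTriangle_indicator_eq_snd (F : ℝ × ℝ → ℝ) (t s : ℝ) :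
    (convTriangle x).indicator F (t, s) =
      (Icc 0 x).indicator (fun s => (Icc s x).indicator (fun t => F (t, s)) t) s := by
  simp only [convTriangle, indicator, mem_Icc, mem_ofPred_eq]
  split_ifs <;> grind

theorem integrable_convTriangle_indicator (hf : IntegrableOn f (Icc 0 x))
    (hg : IntegrableOn g (Icc 0 x)) :
    Integrable ((convTriangle x).indicator fun p => f p.2 * g (p.1 - p.2))
      (volume.prod volume) := by
  have hT : MeasurableSet (convTriangle x) :=
    (measurableSet_le measurable_const measurable_snd).inter
      ((measurableSet_le measurable_snd measurable_fst).inter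
        (measurableSet_le measurable_fst measurable_const))
  have := ((integrable_indicator_iff measurableSet_Icc).mpr hf).convolution_integrand
    (ContinuousLinearMap.mul ℝ ℝ) ((integrable_indicator_iff measurableSet_Icc).mpr hg)
    (μ := volume) (ν := volume)
  rw [← indicator_congr fun p (hp : p ∈ convTriangle x) => ?_]
  · exact this.indicator hT
  obtain ⟨h1, h2, h3⟩ := hp
  rw [ContinuousLinearMap.mul_apply',
    indicator_of_mem (show p.2 ∈ Icc 0 x from ⟨h1, h2.trans h3⟩),
    indicator_of_mem (show p.1 - p.2 ∈ Icc 0 x from ⟨sub_nonneg.2 h2, by linarith⟩)]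

theorem integral_convTriangle_indicator_fst (t : ℝ) :
    ∫ s, (convTriangle x).indicator (fun p => f p.2 * g (p.1 - p.2)) (t, s) =
      (Icc 0 x).indicator (laplaceConv f g) t := by
  simp_rw [convTriangle_indicator_eq_fst]
  by_cases ht : t ∈ Icc 0 x
  · simp only [indicator_of_mem ht]
    rw [MeasureTheory.integral_indicator measurableSet_Icc, integral_Icc_eq_integral_Ioc,
      ← integral_of_le ht.1, laplaceConv]
  · simp only [indicator_of_notMem ht, MeasureTheory.integral_zero]

theorem integral_convTriangle_indicator_snd (s : ℝ) :
    ∫ t, (convTriangle x).indicator (fun p => f p.2 * g (p.1 - p.2)) (t, s) =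
      (Icc 0 x).indicator (fun s => f s * ∫ r in (0:ℝ)..(x - s), g r) s := by
  simp_rw [convTriangle_indicator_eq_snd]
  by_cases hs : s ∈ Icc 0 x
  · simp only [indicator_of_mem hs]
    rw [MeasureTheory.integral_indicator measurableSet_Icc, integral_Icc_eq_integral_Ioc,
      ← integral_of_le hs.2, intervalIntegral.integral_const_mul, integral_comp_sub_right,
      sub_self]
  · simp only [indicator_of_notMem hs, MeasureTheory.integral_zero]

theorem intervalIntegrable_laplaceConv (hx : 0 ≤ x) (hf : IntervalIntegrable f volume 0 x)
    (hg : IntervalIntegrable g volume 0 x) : IntervalIntegrable (laplaceConv f g) volume 0 x := by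
  rw [intervalIntegrable_iff_integrableOn_Icc_of_le hx] at *
  refine (integrable_indicator_iff measurableSet_Icc).mp ?_
  simpa only [integral_convTriangle_indicator_fst] using
    (integrable_convTriangle_indicator hf hg).integral_prod_left

theorem integral_laplaceConv (hx : 0 ≤ x) (hf : IntervalIntegrable f volume 0 x)
    (hg : IntervalIntegrable g volume 0 x) :
    ∫ t in (0:ℝ)..x, laplaceConv f g t = laplaceConv f (fun y => ∫ r in (0:ℝ)..y, g r) x := by
  rw [intervalIntegrable_iff_integrableOn_Icc_of_le hx] at hf hg
  have hswap := integral_integral_swap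
    (f := fun t s => (convTriangle x).indicator (fun p => f p.2 * g (p.1 - p.2)) (t, s))
    (integrable_convTriangle_indicator hf hg)
  simp only [integral_convTriangle_indicator_fst, integral_convTriangle_indicator_snd,
    MeasureTheory.integral_indicator measurableSet_Icc] at hswap
  rw [integral_of_le hx, laplaceConv, integral_of_le hx, ← integral_Icc_eq_integral_Ioc,
    ← integral_Icc_eq_integral_Ioc, hswap]

theorem mul_laplaceConv_self {u : ℝ}
    (h : IntervalIntegrable (fun t => f t * f (u - t)) volume 0 u) :
    u * laplaceConv f f u = 2 * ∫ t in (0:ℝ)..u, t * (f t * f (u - t)) := by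
  have hrefl : ∫ t in (0:ℝ)..u, (u - t) * (f t * f (u - t)) =
      ∫ t in (0:ℝ)..u, t * (f t * f (u - t)) := by
    have := integral_comp_sub_left (a := 0) (b := u) (fun t => t * (f t * f (u - t))) u
    simp only [sub_sub_cancel, sub_self, sub_zero] at this
    rw [← this]
    congr 1 with t
    ring
  calc u * laplaceConv f f u
      = ∫ t in (0:ℝ)..u, (t * (f t * f (u - t)) + (u - t) * (f t * f (u - t))) := by
        rw [laplaceConv, ← intervalIntegral.integral_const_mul]
        congr 1 with t
        ring
    _ = 2 * ∫ t in (0:ℝ)..u, t * (f t * f (u - t)) := by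
        rw [integral_add (h.continuousOn_mul (g := fun t => t) continuousOn_id)
          (h.continuousOn_mul (g := fun t => u - t) (continuousOn_const.sub continuousOn_id)),
          hrefl, two_mul]

end LaplaceConv

section VanishingBelow

variable {f : ℝ → ℝ} {a b c : ℝ}

theorem integrableOn_Iic_of_eq_zero_of_lt (h0 : ∀ x < c, f x = 0) : IntegrableOn f (Iic c) :=
  (integrableOn_Iic_iff_integrableOn_Iio).mpr
    (integrableOn_zero.congr_fun (fun x hx => (h0 x hx).symm) measurableSet_Iio)

theorem intervalIntegrable_of_eq_zero_of_lt (h0 : ∀ x < c, f x = 0) (ha : a ≤ c)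
    (hb : b ≤ c) : IntervalIntegrable f volume a b :=
  ((integrableOn_Iic_of_eq_zero_of_lt h0).mono_set
    fun _ hx => hx.2.trans (max_le ha hb)).intervalIntegrable

theorem integral_eq_zero_of_eq_zero_of_lt (h0 : ∀ x < c, f x = 0) (ha : a ≤ c) (hb : b ≤ c) :
    ∫ x in a..b, f x = 0 := by
  refine integral_zero_ae ?_
  filter_upwards [Measure.ae_ne volume c] with x hx hmem
  exact h0 x ((hmem.2.trans (max_le ha hb)).lt_of_ne hx)

theorem integral_eq_integral_of_eq_zero_of_lt (h0 : ∀ x < c, f x = 0) (ha : a ≤ c)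
    (hf : IntervalIntegrable f volume a b) : ∫ x in a..b, f x = ∫ x in c..b, f x := by
  have hac := intervalIntegrable_of_eq_zero_of_lt h0 ha le_rfl
  rw [← integral_add_adjacent_intervals hac (hac.symm.trans hf),
    integral_eq_zero_of_eq_zero_of_lt h0 ha le_rfl, zero_add]

end VanishingBelow

structure IsDelaySolution (a b : ℝ) (f : ℝ → ℝ) : Prop where
  eq_zero_of_lt_one : ∀ u < 1, f u = 0
  mul_eq : ∀ u, 1 ≤ u → u * f u = a + b * ∫ t in (1:ℝ)..(u - 1), f t

namespace IsDelaySolution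

variable {a b : ℝ} {f g : ℝ → ℝ}

theorem eq_div (hf : IsDelaySolution a b f) {u : ℝ} (hu : 1 ≤ u) :
    f u = (a + b * ∫ t in (1:ℝ)..(u - 1), f t) / u :=
  eq_div_of_mul_eq (zero_lt_one.trans_le hu).ne' ((mul_comm _ _).trans (hf.mul_eq u hu))

theorem continuousOn_Icc (hf : IsDelaySolution a b f) {c : ℝ} (hc : 1 ≤ c)
    (hint : IntegrableOn f (Iic c)) : ContinuousOn f (Icc 1 (c + 1)) := by
  have h0c : (0:ℝ) ≤ c := zero_le_one.trans hc
  have hP : ContinuousOn (fun x => ∫ t in (1:ℝ)..x, f t) (Icc 0 c) := by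
    rw [← uIcc_of_le h0c]
    exact continuousOn_primitive_interval'
      (hint.mono_set fun x hx => hx.2.trans (max_le h0c le_rfl)).intervalIntegrable
      (by rw [uIcc_of_le h0c]; exact ⟨zero_le_one, hc⟩)
  refine ContinuousOn.congr ?_ fun u hu => hf.eq_div hu.1
  refine (continuousOn_const.add (continuousOn_const.mul
    (hP.comp (continuous_sub_right 1).continuousOn
      fun u hu => ⟨sub_nonneg.2 hu.1, sub_le_iff_le_add.2 hu.2⟩))).div continuousOn_id
    fun u hu => (zero_lt_one.trans_le hu.1).ne'

theorem integrableOn_Iic (hf : IsDelaySolution a b f) (c : ℝ) : IntegrableOn f (Iic c) := by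
  have hn : ∀ n : ℕ, IntegrableOn f (Iic ((n : ℝ) + 1)) := by
    intro n
    induction n with
    | zero => simpa using integrableOn_Iic_of_eq_zero_of_lt hf.eq_zero_of_lt_one
    | succ n ih =>
      have h1 : (1:ℝ) ≤ n + 1 := by linarith [n.cast_nonneg (α := ℝ)]
      have := (integrableOn_Iic_of_eq_zero_of_lt hf.eq_zero_of_lt_one).union
        (hf.continuousOn_Icc h1 ih).integrableOn_Icc
      rwa [Iic_union_Icc_eq_Iic (by linarith), ← Nat.cast_succ] at this
  obtain ⟨n, hn'⟩ := exists_nat_ge c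
  exact (hn n).mono_set (Iic_subset_Iic.mpr (by linarith))

theorem intervalIntegrable (hf : IsDelaySolution a b f) (c d : ℝ) :
    IntervalIntegrable f volume c d :=
  ((hf.integrableOn_Iic (max c d)).mono_set fun _ hx => hx.2).intervalIntegrable

theorem exists_abs_le (hf : IsDelaySolution a b f) (v : ℝ) : ∃ C, ∀ t ≤ v, |f t| ≤ C := by
  obtain ⟨C, hC⟩ := isCompact_Icc.exists_bound_of_continuousOn
    (hf.continuousOn_Icc (le_max_left 1 v) (hf.integrableOn_Iic _))
  refine ⟨max C 0, fun t ht => ?_⟩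
  rcases lt_or_ge t 1 with h | h
  · simp [hf.eq_zero_of_lt_one t h]
  · exact (hC t ⟨h, by linarith [le_max_right 1 v]⟩).trans (le_max_left _ _)

theorem intervalIntegrable_mul_comp_sub (hf : IsDelaySolution a b f) (u : ℝ) :
    IntervalIntegrable (fun t => f t * f (u - t)) volume 0 u := by
  obtain ⟨C, hC⟩ := hf.exists_abs_le (max 0 u)
  have hsub : IntervalIntegrable (fun t => f (u - t)) volume 0 u := by
    simpa using (hf.intervalIntegrable u 0).comp_sub_left u
  rw [intervalIntegrable_iff] at hsub ⊢
  refine (intervalIntegrable_iff.mp (hf.intervalIntegrable 0 u)).mul_bdd hsub.aestronglyMeasurable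
    (c := C) ?_
  filter_upwards [ae_restrict_mem measurableSet_uIoc] with t ht
  exact (Real.norm_eq_abs _).trans_le (hC _ (by linarith [ht.1, min_add_max 0 u]))

theorem mul_laplaceConv_self_eq (hf : IsDelaySolution a b f) {u : ℝ} (hu : 1 ≤ u) :
    u * laplaceConv f f u = 2 * a * (∫ t in (1:ℝ)..(u - 1), f t) +
      2 * b * ∫ t in (1:ℝ)..(u - 1), laplaceConv f f t := by
  set W : ℝ → ℝ := fun y => ∫ t in (0:ℝ)..y, f t
  have hW : ∀ y, ∫ t in (1:ℝ)..y, f t = W y := fun y =>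
    (integral_eq_integral_of_eq_zero_of_lt hf.eq_zero_of_lt_one zero_le_one
      (hf.intervalIntegrable 0 y)).symm
  have hff := hf.intervalIntegrable_mul_comp_sub u
  have hsub : IntervalIntegrable (fun t => f (u - t)) volume 1 u := by
    simpa using (hf.intervalIntegrable (u - 1) 0).comp_sub_left u
  have hshift : ∫ t in (1:ℝ)..u, W (t - 1) * f (u - t) = laplaceConv f W (u - 1) := by
    have := integral_comp_sub_left (a := 1) (b := u) (fun s => f s * W (u - 1 - s)) u
    rw [sub_self] at this
    rw [laplaceConv, ← this]
    congr 1 with t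
    rw [show u - 1 - (u - t) = t - 1 by ring, mul_comm]
  have hmoment : ∫ t in (0:ℝ)..u, t * (f t * f (u - t)) =
      a * W (u - 1) + b * laplaceConv f W (u - 1) :=
    calc ∫ t in (0:ℝ)..u, t * (f t * f (u - t))
        = ∫ t in (1:ℝ)..u, t * (f t * f (u - t)) :=
          integral_eq_integral_of_eq_zero_of_lt
            (fun t ht => by rw [hf.eq_zero_of_lt_one t ht, zero_mul, mul_zero]) zero_le_one
            (hff.continuousOn_mul (g := fun t => t) continuousOn_id)
      _ = ∫ t in (1:ℝ)..u, (a * f (u - t) + b * (W (t - 1) * f (u - t))) := by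
          refine integral_congr fun t ht => ?_
          rw [uIcc_of_le hu] at ht
          rw [← mul_assoc, hf.mul_eq t ht.1, hW]
          ring
      _ = a * W (u - 1) + b * laplaceConv f W (u - 1) := by
          rw [integral_add (hsub.const_mul a) ((hsub.continuousOn_mul (g := fun t => W (t - 1))
              ((continuous_primitive hf.intervalIntegrable 0).comp
                (continuous_sub_right 1)).continuousOn).const_mul b),
            intervalIntegral.integral_const_mul, intervalIntegral.integral_const_mul,
            integral_comp_sub_left, sub_self, hshift]
  have hconv : ∫ t in (1:ℝ)..(u - 1), laplaceConv f f t = laplaceConv f W (u - 1) := by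
    have hu' : 0 ≤ u - 1 := sub_nonneg.2 hu
    rw [← integral_eq_integral_of_eq_zero_of_lt
        (fun t ht => laplaceConv_eq_zero_of_lt hf.eq_zero_of_lt_one one_pos ht) zero_le_one
        (intervalIntegrable_laplaceConv hu' (hf.intervalIntegrable _ _)
          (hf.intervalIntegrable _ _)),
      integral_laplaceConv hu' (hf.intervalIntegrable _ _) (hf.intervalIntegrable _ _)]
  rw [mul_laplaceConv_self hff, hmoment, hW, hconv]
  ring

theorem two_mul_add_laplaceConv (hf : IsDelaySolution a b f) :
    IsDelaySolution (2 * a ^ 2) (2 * b) fun u => 2 * a * f u + b * laplaceConv f f u where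
  eq_zero_of_lt_one u hu := by
    rw [hf.eq_zero_of_lt_one u hu, laplaceConv_eq_zero_of_lt hf.eq_zero_of_lt_one one_pos hu]
    ring
  mul_eq u hu := by
    have hK : IntervalIntegrable (laplaceConv f f) volume 1 (u - 1) :=
      (intervalIntegrable_of_eq_zero_of_lt
        (fun t ht => laplaceConv_eq_zero_of_lt hf.eq_zero_of_lt_one one_pos ht)
        le_rfl zero_le_one).trans
      (intervalIntegrable_laplaceConv (sub_nonneg.2 hu) (hf.intervalIntegrable _ _)
        (hf.intervalIntegrable _ _))
    rw [integral_add ((hf.intervalIntegrable _ _).const_mul _) (hK.const_mul _),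
      intervalIntegral.integral_const_mul, intervalIntegral.integral_const_mul]
    linear_combination (2 * a) * hf.mul_eq u hu + b * hf.mul_laplaceConv_self_eq hu

theorem unique (hf : IsDelaySolution a b f) (hg : IsDelaySolution a b g) : f = g := by
  suffices h : ∀ n : ℕ, ∀ u ≤ (n : ℝ), f u = g u by
    funext u
    obtain ⟨n, hn⟩ := exists_nat_ge u
    exact h n u hn
  intro n
  induction n with
  | zero =>
    intro u hu
    rw [Nat.cast_zero] at hu
    rw [hf.eq_zero_of_lt_one u (by linarith), hg.eq_zero_of_lt_one u (by linarith)]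
  | succ n ih =>
    intro u hu
    rcases lt_or_ge u 1 with hu1 | hu1
    · rw [hf.eq_zero_of_lt_one u hu1, hg.eq_zero_of_lt_one u hu1]
    have hint : ∫ t in (1:ℝ)..(u - 1), f t = ∫ t in (1:ℝ)..(u - 1), g t := by
      rcases le_total (u - 1) 1 with h | h
      · rw [integral_eq_zero_of_eq_zero_of_lt hf.eq_zero_of_lt_one le_rfl h,
          integral_eq_zero_of_eq_zero_of_lt hg.eq_zero_of_lt_one le_rfl h]
      · refine integral_congr fun t ht => ih t ?_
        rw [uIcc_of_le h] at ht
        push_cast at hu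
        linarith [ht.2]
    refine mul_left_cancel₀ (zero_lt_one.trans_le hu1).ne' ?_
    rw [hf.mul_eq u hu1, hg.mul_eq u hu1, hint]

end IsDelaySolution

theorem xi_eq_buchstab_convolution (ξ ω : ℝ → ℝ)
    (hξ0 : ∀ u : ℝ, u < 1 → ξ u = 0)
    (hξ : ∀ u : ℝ, 1 ≤ u → u * ξ u = 2 + 2 * ∫ t in (1:ℝ)..(u - 1), ξ t)
    (hω0 : ∀ u : ℝ, u < 1 → ω u = 0)
    (hω : ∀ u : ℝ, 1 ≤ u → u * ω u = 1 + ∫ t in (1:ℝ)..(u - 1), ω t) :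
    ∀ u : ℝ, 0 ≤ u → ξ u = 2 * ω u + ∫ t in (0:ℝ)..u, ω t * ω (u - t) := by
  have hωsol : IsDelaySolution 1 1 ω := ⟨hω0, by simpa only [one_mul] using hω⟩
  have hF : IsDelaySolution 2 2 fun u => 2 * ω u + laplaceConv ω ω u := by
    simpa using hωsol.two_mul_add_laplaceConv
  intro u _
  exact congrFun ((IsDelaySolution.mk hξ0 hξ).unique hF) u
end

section
/- Suppose θ : ℕ → ℝ∪{∞} satisfies θ(1) ≥ 2 and θ(n) ≥ P^+(n) for all n ≥ 2, and let f be a multiplicative arithmetic function. Then for every x ≥ 0: Σ_{m ≤ x} f(m) = Σ_{n ∈ B_θ, n ≤ x} f(n) · ( 1 + Σ_{2 ≤ r ≤ x/n, P^-(r) > θ(n)} f(r) ). -/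
open Real MeasureTheory
open scoped Classical

/-- The set `B_θ` for `θ : ℕ → ℝ ∪ {∞}` (i.e. `EReal`-valued): `1 ∈ B_θ`, and
`n = p₁^{α₁}⋯p_k^{α_k}` (with `p₁ < ⋯ < p_k`) belongs to `B_θ` iff
`p_i ≤ θ(p₁^{α₁}⋯p_{i-1}^{α_{i-1}})` for all `i`. -/
def BsetE (θ : ℕ → EReal) : Set ℕ :=
  {n | 0 < n ∧ ∀ p : ℕ, p.Prime → p ∣ n →
    (((p : ℝ) : EReal)) ≤ θ (∏ q ∈ n.primeFactors.filter (· < p), q ^ n.factorization q)}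

/-!
Every `m ≥ 1` splits uniquely as `m = n r` with `n ∈ B_θ` and `P⁻(r) > θ(n)`: `n` is the
longest initial segment `p₁^{α₁}⋯p_i^{α_i}` of the factorisation of `m` all of whose primes pass
the `B_θ` test. Uniqueness rests on `θ(n) ≥ P⁺(n)`: it puts every prime of `r` above every prime
of `n`, so the test reads the same in `n r` as in `n` up to `P⁻(r)`, where it fails. Since `n`
and `r` are then coprime, `f(n r) = f(n) f(r)`, and the sum over `m ≤ x` regroups as a sum over
the pairs `(n, r)`.
-/

namespace Finset

variable {α : Type*} [LinearOrder α]

noncomputable def prefixWhile (s : Finset α) (g : α → Prop) : Finset α :=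
  s.filter fun p => ∀ q ∈ s, q ≤ p → g q

variable {s A B : Finset α} {g : α → Prop} {p q : α}

theorem mem_prefixWhile_of_le (hp : p ∈ s.prefixWhile g) (hq : q ∈ s) (hqp : q ≤ p) :
    q ∈ s.prefixWhile g := by
  simp only [prefixWhile, mem_filter] at hp ⊢
  exact ⟨hq, fun r hr hrq => hp.2 r hr (hrq.trans hqp)⟩

theorem of_mem_prefixWhile (hp : p ∈ s.prefixWhile g) : g p :=
  (mem_filter.1 hp).2 p (mem_filter.1 hp).1 le_rfl

theorem exists_le_not_of_notMem_prefixWhile (hp : p ∈ s) (hp' : p ∉ s.prefixWhile g) :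
    ∃ q ≤ p, ¬ g q ∧ ∀ x ∈ s, x < q ↔ x ∈ s.prefixWhile g := by
  simp only [prefixWhile, mem_filter, not_and, not_forall] at hp'
  obtain ⟨y, hy, hyp, hgy⟩ := hp' hp
  have hbad : (s.filter (¬ g ·)).Nonempty := ⟨y, mem_filter.2 ⟨hy, hgy⟩⟩
  set q := (s.filter (¬ g ·)).min' hbad
  have hq : q ∈ s ∧ ¬ g q := mem_filter.1 (min'_mem _ hbad)
  have hq_le : ∀ z ∈ s, ¬ g z → q ≤ z := fun z hz hgz =>
    min'_le _ z (mem_filter.2 ⟨hz, hgz⟩)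
  refine ⟨q, (hq_le y hy hgy).trans hyp, hq.2, fun x hx => ⟨fun hxq => ?_, fun hx' => ?_⟩⟩
  · exact mem_filter.2 ⟨hx, fun z hz hzx => not_not.1 fun hgz =>
      (hzx.trans_lt hxq).not_ge (hq_le z hz hgz)⟩
  · by_contra hqx
    exact hq.2 (of_mem_prefixWhile (mem_prefixWhile_of_le hx' hq.1 (not_lt.1 hqx)))

theorem prefixWhile_eq_of_union (hs : s = A ∪ B) (hAB : ∀ a ∈ A, ∀ b ∈ B, a < b)
    (hA : ∀ a ∈ A, g a) (hB : ∀ b ∈ B, ∃ b' ∈ B, b' ≤ b ∧ ¬ g b') :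
    s.prefixWhile g = A := by
  subst hs
  ext p
  simp only [prefixWhile, mem_filter, mem_union]
  constructor
  · rintro ⟨hpA | hpB, hp⟩
    · exact hpA
    · obtain ⟨b', hb', hb'p, hgb'⟩ := hB p hpB
      exact absurd (hp b' (Or.inr hb') hb'p) hgb'
  · intro hpA
    refine ⟨Or.inl hpA, fun q hq hqp => ?_⟩
    rcases hq with hqA | hqB
    · exact hA q hqA
    · exact absurd hqp (hAB p hpA q hqB).not_ge

end Finset

namespace Nat

def factorPart (m : ℕ) (P : ℕ → Prop) [DecidablePred P] : ℕ :=
  ∏ p ∈ m.primeFactors.filter P, p ^ m.factorization p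

variable {m n : ℕ} {P Q : ℕ → Prop} [DecidablePred P] [DecidablePred Q]

theorem factorPart_eq_prod_filter_factorization :
    m.factorPart P = (m.factorization.filter P).prod (· ^ ·) := by
  rw [Finsupp.prod_filter_index, Finsupp.support_filter, support_factorization, factorPart]

theorem factorization_factorPart : (m.factorPart P).factorization = m.factorization.filter P := by
  rw [factorPart_eq_prod_filter_factorization]
  refine prod_pow_factorization_eq_self fun p hp => ?_
  rw [Finsupp.support_filter, support_factorization] at hp
  exact prime_of_mem_primeFactors (Finset.mem_filter.1 hp).1

theorem factorPart_ne_zero : m.factorPart P ≠ 0 :=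
  Finset.prod_ne_zero_iff.2 fun _ hp =>
    pow_ne_zero _ (prime_of_mem_primeFactors (Finset.mem_filter.1 hp).1).ne_zero

theorem primeFactors_factorPart : (m.factorPart P).primeFactors = m.primeFactors.filter P := by
  rw [← support_factorization, factorization_factorPart, Finsupp.support_filter,
    support_factorization]

theorem factorPart_congr (h : ∀ p ∈ m.primeFactors, P p ↔ Q p) :
    m.factorPart P = m.factorPart Q := by
  rw [factorPart, factorPart, Finset.filter_congr h]

theorem factorPart_eq_one (h : ∀ p ∈ m.primeFactors, ¬ P p) : m.factorPart P = 1 := by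
  rw [factorPart, Finset.filter_false_of_mem h, Finset.prod_empty]

theorem factorPart_mul_factorPart_not (hm : m ≠ 0) :
    m.factorPart P * m.factorPart (¬ P ·) = m := by
  rw [factorPart, factorPart, Finset.prod_filter_mul_prod_filter_not,
    ← prod_primeFactors_pow_factorization hm]

theorem factorPart_eq_self (hm : m ≠ 0) (h : ∀ p ∈ m.primeFactors, P p) :
    m.factorPart P = m := by
  simpa [factorPart_eq_one (P := (¬ P ·)) (by simpa using h)] using
    factorPart_mul_factorPart_not (P := P) hm

theorem factorPart_mul (hm : m ≠ 0) (hn : n ≠ 0) :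
    (m * n).factorPart P = m.factorPart P * n.factorPart P := by
  refine factorization_inj factorPart_ne_zero (mul_ne_zero factorPart_ne_zero factorPart_ne_zero) ?_
  rw [factorization_mul factorPart_ne_zero factorPart_ne_zero, factorization_factorPart,
    factorization_factorPart, factorization_factorPart, factorization_mul hm hn, Finsupp.filter_add]

theorem factorPart_factorPart :
    (m.factorPart P).factorPart Q = m.factorPart (fun p => P p ∧ Q p) :=
  eq_of_factorization_eq factorPart_ne_zero factorPart_ne_zero fun _ => by
    simp only [factorization_factorPart, Finsupp.filter_apply]
    split_ifs <;> tauto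

end Nat

namespace BsetE

variable {θ : ℕ → EReal} {m n r p : ℕ}

theorem mem_iff : n ∈ BsetE θ ↔ 0 < n ∧
    ∀ p : ℕ, p ∈ n.primeFactors → ((p : ℝ) : EReal) ≤ θ (n.factorPart (· < p)) := by
  refine and_congr_right fun hn => ?_
  simp only [Nat.mem_primeFactors, and_imp]
  exact ⟨fun h p hp hpn _ => h p hp hpn, fun h p hp hpn => h p hp hpn hn.ne'⟩

noncomputable def headPrimes (θ : ℕ → EReal) (m : ℕ) : Finset ℕ :=
  m.primeFactors.prefixWhile fun p => ((p : ℝ) : EReal) ≤ θ (m.factorPart (· < p))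

noncomputable def head (θ : ℕ → EReal) (m : ℕ) : ℕ := m.factorPart (· ∈ headPrimes θ m)

noncomputable def tail (θ : ℕ → EReal) (m : ℕ) : ℕ := m.factorPart (· ∉ headPrimes θ m)

theorem head_mul_tail (hm : m ≠ 0) : head θ m * tail θ m = m :=
  Nat.factorPart_mul_factorPart_not hm

theorem head_mem : head θ m ∈ BsetE θ := by
  refine mem_iff.2 ⟨Nat.pos_of_ne_zero Nat.factorPart_ne_zero, fun p hp => ?_⟩
  rw [head, Nat.primeFactors_factorPart, Finset.mem_filter] at hp
  have hpref : (head θ m).factorPart (· < p) = m.factorPart (· < p) := by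
    rw [head, Nat.factorPart_factorPart]
    exact Nat.factorPart_congr fun q hq =>
      ⟨And.right, fun hqp => ⟨Finset.mem_prefixWhile_of_le hp.2 hq hqp.le, hqp⟩⟩
  have h := Finset.of_mem_prefixWhile hp.2
  rwa [hpref]

theorem lt_of_mem_primeFactors_tail (hp : p ∈ (tail θ m).primeFactors) : θ (head θ m) < p := by
  rw [tail, Nat.primeFactors_factorPart, Finset.mem_filter] at hp
  obtain ⟨q, hqp, hq, hq_iff⟩ := Finset.exists_le_not_of_notMem_prefixWhile hp.1 hp.2
  rw [Nat.factorPart_congr hq_iff, not_le] at hq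
  exact hq.trans_le (by exact_mod_cast hqp)

theorem mem_insert_one_filter_minFac_iff {t : EReal} {N : ℕ} (hn : 0 < n) (hnN : n ≤ N) :
    r ∈ insert 1 ((Finset.Icc 2 (N / n)).filter fun r => t < ((r.minFac : ℝ) : EReal)) ↔
      r ≠ 0 ∧ n * r ≤ N ∧ ∀ p : ℕ, p ∈ r.primeFactors → t < p := by
  rcases eq_or_ne r 1 with rfl | hr1
  · simp [hnN]
  rw [Finset.mem_insert, Finset.mem_filter, Finset.mem_Icc, Nat.le_div_iff_mul_le hn, mul_comm r]
  simp only [hr1, false_or]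
  constructor
  · rintro ⟨⟨hr2, hle⟩, ht⟩
    refine ⟨by omega, hle, fun p hp => ht.trans_le ?_⟩
    exact_mod_cast Nat.minFac_le_of_dvd (Nat.prime_of_mem_primeFactors hp).two_le
      (Nat.dvd_of_mem_primeFactors hp)
  · rintro ⟨hr0, hle, ht⟩
    exact ⟨⟨by omega, hle⟩,
      ht _ (Nat.mem_primeFactors.2 ⟨Nat.minFac_prime hr1, r.minFac_dvd, hr0⟩)⟩

noncomputable def pairs (θ : ℕ → EReal) (N : ℕ) : Finset (Σ _ : ℕ, ℕ) :=
  ((Finset.Icc 1 N).filter fun n => n ∈ BsetE θ).sigma fun n =>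
    insert 1 ((Finset.Icc 2 (N / n)).filter fun r => θ n < ((r.minFac : ℝ) : EReal))

theorem mem_pairs {N : ℕ} {x : Σ _ : ℕ, ℕ} :
    x ∈ pairs θ N ↔ x.1 ∈ BsetE θ ∧ x.2 ≠ 0 ∧ x.1 * x.2 ≤ N ∧
      ∀ p : ℕ, p ∈ x.2.primeFactors → θ x.1 < p := by
  obtain ⟨n, r⟩ := x
  simp only [pairs, Finset.mem_sigma, Finset.mem_filter, Finset.mem_Icc]
  constructor
  · rintro ⟨⟨⟨hn1, hnN⟩, hn⟩, hr⟩
    exact ⟨hn, (mem_insert_one_filter_minFac_iff hn1 hnN).1 hr⟩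
  · rintro ⟨hn, hr0, hnr, hrθ⟩
    have hn1 := (mem_iff.1 hn).1
    have hnN : n ≤ N := (Nat.le_mul_of_pos_right n (Nat.pos_of_ne_zero hr0)).trans hnr
    exact
      ⟨⟨⟨hn1, hnN⟩, hn⟩, (mem_insert_one_filter_minFac_iff hn1 hnN).2 ⟨hr0, hnr, hrθ⟩⟩

variable (hθ : ∀ n p : ℕ, p ∈ n.primeFactors → ((p : ℝ) : EReal) ≤ θ n)
include hθ

theorem lt_of_mem_primeFactors (hr : ∀ q : ℕ, q ∈ r.primeFactors → θ n < q) :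
    ∀ p ∈ n.primeFactors, ∀ q ∈ r.primeFactors, p < q := fun p hp q hq => by
  exact_mod_cast (hθ n p hp).trans_lt (hr q hq)

theorem coprime_of_forall_lt (hn0 : n ≠ 0) (hr0 : r ≠ 0)
    (hr : ∀ q : ℕ, q ∈ r.primeFactors → θ n < q) : n.Coprime r :=
  Nat.coprime_of_dvd fun _ hp hpn hpr => (lt_of_mem_primeFactors hθ hr _
    (Nat.mem_primeFactors.2 ⟨hp, hpn, hn0⟩) _ (Nat.mem_primeFactors.2 ⟨hp, hpr, hr0⟩)).false

theorem headPrimes_mul (hn : n ∈ BsetE θ) (hr0 : r ≠ 0)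
    (hr : ∀ q : ℕ, q ∈ r.primeFactors → θ n < q) :
    headPrimes θ (n * r) = n.primeFactors := by
  have hn0 := (mem_iff.1 hn).1.ne'
  have hlt := lt_of_mem_primeFactors hθ hr
  have hpref : ∀ p, (∀ q ∈ r.primeFactors, p ≤ q) →
      (n * r).factorPart (· < p) = n.factorPart (· < p) := fun p hp => by
    rw [Nat.factorPart_mul hn0 hr0, Nat.factorPart_eq_one fun q hq => (hp q hq).not_gt, mul_one]
  refine Finset.prefixWhile_eq_of_union (Nat.primeFactors_mul hn0 hr0) hlt
    (fun p hp => ?_) (fun q hq => ?_)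
  · rw [hpref p fun q hq => (hlt p hp q hq).le]
    exact (mem_iff.1 hn).2 p hp
  · have hr1 : r ≠ 1 := by rintro rfl; simp at hq
    have hmin : r.minFac ∈ r.primeFactors :=
      Nat.mem_primeFactors.2 ⟨Nat.minFac_prime hr1, r.minFac_dvd, hr0⟩
    have hmin_le : ∀ q ∈ r.primeFactors, r.minFac ≤ q := fun q hq =>
      Nat.minFac_le_of_dvd (Nat.prime_of_mem_primeFactors hq).two_le
        (Nat.dvd_of_mem_primeFactors hq)
    refine ⟨r.minFac, hmin, hmin_le q hq, ?_⟩
    rw [hpref _ hmin_le, Nat.factorPart_eq_self hn0 fun p hp => hlt p hp _ hmin, not_le]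
    exact hr _ hmin

theorem head_mul (hn : n ∈ BsetE θ) (hr0 : r ≠ 0)
    (hr : ∀ q : ℕ, q ∈ r.primeFactors → θ n < q) :
    head θ (n * r) = n := by
  have hn0 := (mem_iff.1 hn).1.ne'
  rw [head, headPrimes_mul hθ hn hr0 hr, Nat.factorPart_mul hn0 hr0,
    Nat.factorPart_eq_self hn0 fun _ => id,
    Nat.factorPart_eq_one fun p hp hpn => (lt_of_mem_primeFactors hθ hr p hpn p hp).false,
    mul_one]

theorem tail_mul (hn : n ∈ BsetE θ) (hr0 : r ≠ 0)
    (hr : ∀ q : ℕ, q ∈ r.primeFactors → θ n < q) :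
    tail θ (n * r) = r := by
  have h := head_mul_tail (θ := θ) (mul_ne_zero (mem_iff.1 hn).1.ne' hr0)
  rw [head_mul hθ hn hr0 hr] at h
  exact Nat.eq_of_mul_eq_mul_left (mem_iff.1 hn).1 h

theorem sum_Icc_eq_sum_pairs {M : Type*} [AddCommMonoid M] (g : ℕ → M) (N : ℕ) :
    ∑ m ∈ Finset.Icc 1 N, g m = ∑ x ∈ pairs θ N, g (x.1 * x.2) := by
  refine Finset.sum_bij' (fun m _ => ⟨head θ m, tail θ m⟩) (fun x _ => x.1 * x.2)
    (fun m hm => ?_) (fun x hx => ?_) (fun m hm => ?_) (fun x hx => ?_) (fun m hm => ?_)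
  · have hm0 : m ≠ 0 := by have := (Finset.mem_Icc.1 hm).1; omega
    exact mem_pairs.2 ⟨head_mem, Nat.factorPart_ne_zero,
      (head_mul_tail hm0).trans_le (Finset.mem_Icc.1 hm).2, fun p => lt_of_mem_primeFactors_tail⟩
  · obtain ⟨hn, hr0, hnr, -⟩ := mem_pairs.1 hx
    exact Finset.mem_Icc.2 ⟨Nat.pos_of_ne_zero (mul_ne_zero (mem_iff.1 hn).1.ne' hr0), hnr⟩
  · exact head_mul_tail (by have := (Finset.mem_Icc.1 hm).1; omega)
  · obtain ⟨hn, hr0, -, hrθ⟩ := mem_pairs.1 hx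
    rw [head_mul hθ hn hr0 hrθ, tail_mul hθ hn hr0 hrθ]
  · rw [head_mul_tail (by have := (Finset.mem_Icc.1 hm).1; omega)]

theorem sum_Icc_eq_sum_BsetE {R : Type*} [CommSemiring R] {f : ℕ → R}
    (hf : ∀ m n : ℕ, Nat.Coprime m n → f (m * n) = f m * f n) (N : ℕ) :
    ∑ m ∈ Finset.Icc 1 N, f m =
      ∑ n ∈ (Finset.Icc 1 N).filter (fun n => n ∈ BsetE θ),
        f n * (1 + ∑ r ∈ (Finset.Icc 2 (N / n)).filter
          (fun r => θ n < ((r.minFac : ℝ) : EReal)), f r) := by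
  rw [sum_Icc_eq_sum_pairs hθ, pairs, Finset.sum_sigma]
  refine Finset.sum_congr rfl fun n hn => ?_
  obtain ⟨hn1, hnN⟩ := Finset.mem_Icc.1 (Finset.mem_filter.1 hn).1
  have h1 : 1 ∉ (Finset.Icc 2 (N / n)).filter fun r => θ n < ((r.minFac : ℝ) : EReal) :=
    fun h => absurd (Finset.mem_Icc.1 (Finset.mem_filter.1 h).1).1 (by norm_num)
  rw [Finset.sum_insert h1, mul_one, mul_add, mul_one, Finset.mul_sum]
  refine congrArg _ (Finset.sum_congr rfl fun r hr => hf n r ?_)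
  obtain ⟨hr0, -, hrθ⟩ :=
    (mem_insert_one_filter_minFac_iff hn1 hnN).1 (Finset.mem_insert_of_mem hr)
  exact coprime_of_forall_lt hθ (Nat.one_le_iff_ne_zero.1 hn1) hr0 hrθ

end BsetE

theorem funceq_general (θ : ℕ → EReal)
    (hθP : ∀ n : ℕ, 2 ≤ n → ∀ p : ℕ, p.Prime → p ∣ n → (((p : ℝ) : EReal)) ≤ θ n)
    (f : ℕ → ℝ)
    (hfmul : ∀ m n : ℕ, Nat.Coprime m n → f (m * n) = f m * f n) :
    ∀ x : ℝ, 0 ≤ x →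
      ∑ m ∈ Finset.Icc 1 ⌊x⌋₊, f m =
        ∑ n ∈ (Finset.Icc 1 ⌊x⌋₊).filter (fun n => n ∈ BsetE θ),
          f n * (1 + ∑ r ∈ (Finset.Icc 2 ⌊x / (n : ℝ)⌋₊).filter
              (fun r => θ n < ((r.minFac : ℝ) : EReal)), f r) := by
  intro x _
  have hθ : ∀ n p : ℕ, p ∈ n.primeFactors → ((p : ℝ) : EReal) ≤ θ n := fun n p hp =>
    hθP n ((Nat.prime_of_mem_primeFactors hp).two_le.trans (Nat.le_of_mem_primeFactors hp)) p
      (Nat.prime_of_mem_primeFactors hp) (Nat.dvd_of_mem_primeFactors hp)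
  simp only [Nat.floor_div_natCast]
  exact BsetE.sum_Icc_eq_sum_BsetE hθ hfmul ⌊x⌋₊

theorem funceq (θ : ℕ → EReal)
    (hθ1 : ((2 : ℝ) : EReal) ≤ θ 1)
    (hθP : ∀ n : ℕ, 2 ≤ n → ∀ p : ℕ, p.Prime → p ∣ n → (((p : ℝ) : EReal)) ≤ θ n)
    (f : ℕ → ℝ) (hf1 : f 1 = 1)
    (hfmul : ∀ m n : ℕ, Nat.Coprime m n → f (m * n) = f m * f n) :
    ∀ x : ℝ, 0 ≤ x →
      ∑ m ∈ Finset.Icc 1 ⌊x⌋₊, f m =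
        ∑ n ∈ (Finset.Icc 1 ⌊x⌋₊).filter (fun n => n ∈ BsetE θ),
          f n * (1 + ∑ r ∈ (Finset.Icc 2 ⌊x / (n : ℝ)⌋₊).filter
              (fun r => θ n < ((r.minFac : ℝ) : EReal)), f r) :=
  funceq_general θ hθP f hfmul
end
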